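/- arXiv:2010.15729 — 3 statements merged into one kernel-verified Lean document; each statement's English description precedes it below -/
import Mathlib

section
/- A 2m × 2m quantum covariance matrix V is pure if and only if the complex matrix V + iΩ has rank m. -/
/-!
From `V ± iΩ ≥ 0` and the invertibility of `Ω` one gets `V > 0`, so there is `T` with
`Tᴴ V T = 1`. This congruence turns `V ± iΩ` into `1 ± S` with `S = Tᴴ (iΩ) T` Hermitian;
positivity of `1 ± S` puts the eigenvalues of `S` in `[-1, 1]`, and
`det S · det V = det (iΩ) = ±1`.
Hence `det V = 1` iff `|det S| = 1` iff every eigenvalue of `S` is `±1` iff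
`rank (1 + S) + rank (1 - S) = 2m`. Finally `V + iΩ` is the transpose of the Hermitian matrix
`V - iΩ`, so the two ranks agree.
-/

open Matrix ComplexOrder

/-- The standard symplectic form on `m` modes, in the `x|p` block representation. -/
noncomputable def Omg (m : ℕ) : Matrix (Fin m ⊕ Fin m) (Fin m ⊕ Fin m) ℝ :=
  fromBlocks 0 1 (-1) 0

theorem Fintype.prod_eq_one_iff_of_mem_Icc {ι : Type*} [Fintype ι] {f : ι → ℝ}
    (hf : ∀ i, f i ∈ Set.Icc 0 1) : ∏ i, f i = 1 ↔ ∀ i, f i = 1 := by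
  lift f to ι → NNReal using fun i => (hf i).1
  have h1 : f ≤ 1 := fun i => by exact_mod_cast (hf i).2
  simpa [← NNReal.coe_prod, funext_iff] using Fintype.prod_eq_one_iff_of_le_one h1

theorem Fintype.card_subtype_add_card_subtype_eq_card_iff {ι : Type*} [Fintype ι]
    {p q : ι → Prop} [DecidablePred p] [DecidablePred q] (hpq : ∀ i, p i ∨ q i) :
    card {i // p i} + card {i // q i} = card ι ↔ ∀ i, ¬(p i ∧ q i) := by
  classical
  have h := Finset.card_union_add_card_inter (Finset.univ.filter p) (Finset.univ.filter q)
  rw [← Finset.filter_or, ← Finset.filter_and, Finset.filter_true_of_mem fun i _ => hpq i,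
    Finset.card_univ] at h
  rw [Fintype.card_subtype, Fintype.card_subtype, ← h, add_eq_left, Finset.card_eq_zero,
    Finset.filter_eq_empty_iff]
  simp

namespace Matrix

variable {n 𝕜 : Type*} [RCLike 𝕜]

theorem isHermitian_of_isHermitian_add_of_isHermitian_sub {P X : Matrix n n 𝕜}
    (h₁ : (P + X).IsHermitian) (h₂ : (P - X).IsHermitian) : X.IsHermitian := by
  ext i j
  have e₁ := congrFun₂ h₁ i j
  have e₂ := congrFun₂ h₂ i j
  simp only [conjTranspose_apply, add_apply, sub_apply, star_add, star_sub] at e₁ e₂ ⊢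
  linear_combination (e₁ - e₂) / 2

variable [Fintype n] [DecidableEq n]

namespace IsHermitian

variable {S : Matrix n n 𝕜}

theorem rank_cfc (hS : S.IsHermitian) (f : ℝ → ℝ) :
    (cfc f S).rank = Fintype.card {i // f (hS.eigenvalues i) ≠ 0} := by
  rw [hS.cfc_eq, IsHermitian.cfc, Unitary.conjStarAlgAut_apply, ← Unitary.coe_star]
  simp [-isUnit_iff_ne_zero, -Unitary.coe_star, rank_diagonal]

theorem posSemidef_cfc_iff (hS : S.IsHermitian) (f : ℝ → ℝ) :
    (cfc f S).PosSemidef ↔ ∀ i, 0 ≤ f (hS.eigenvalues i) := by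
  rw [hS.cfc_eq, IsHermitian.cfc, Unitary.conjStarAlgAut_apply,
    Unitary.isUnit_coe.posSemidef_star_right_conjugate_iff, posSemidef_diagonal_iff]
  simp

theorem one_add_eq_cfc (hS : S.IsHermitian) : 1 + S = cfc (fun x : ℝ => 1 + x) S := by
  rw [cfc_const_add 1 (fun x => x) S, cfc_id' ℝ S, map_one]

theorem one_sub_eq_cfc (hS : S.IsHermitian) : 1 - S = cfc (fun x : ℝ => 1 - x) S := by
  rw [cfc_sub (fun _ => 1) (fun x => x) S, cfc_const_one ℝ S, cfc_id' ℝ S]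

theorem det_sq_eq_one_iff_rank_add_rank (hS : S.IsHermitian) (h₁ : (1 + S).PosSemidef)
    (h₂ : (1 - S).PosSemidef) :
    S.det ^ 2 = 1 ↔ (1 + S).rank + (1 - S).rank = Fintype.card n := by
  rw [hS.one_add_eq_cfc, hS.posSemidef_cfc_iff] at h₁
  rw [hS.one_sub_eq_cfc, hS.posSemidef_cfc_iff] at h₂
  have hμ : ∀ i, hS.eigenvalues i ^ 2 ∈ Set.Icc 0 1 := fun i =>
    ⟨sq_nonneg _, by nlinarith [h₁ i, h₂ i]⟩
  rw [hS.one_add_eq_cfc, hS.one_sub_eq_cfc, hS.rank_cfc, hS.rank_cfc,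
    Fintype.card_subtype_add_card_subtype_eq_card_iff fun i => by
      by_contra! h; linarith [h.1, h.2],
    hS.det_eq_prod_eigenvalues, ← RCLike.ofReal_prod, ← RCLike.ofReal_pow, ← RCLike.ofReal_one,
    RCLike.ofReal_inj, ← Finset.prod_pow, Fintype.prod_eq_one_iff_of_mem_Icc hμ]
  refine forall_congr' fun i => ?_
  rw [sq_eq_one_iff, not_and_or, not_not, not_not, add_eq_zero_iff_eq_neg', sub_eq_zero,
    eq_comm (a := (1 : ℝ))]
  tauto

end IsHermitian

variable {P X : Matrix n n 𝕜}

theorem posDef_of_posSemidef_add_of_posSemidef_sub (hX : IsUnit X) (h₁ : (P + X).PosSemidef)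
    (h₂ : (P - X).PosSemidef) : P.PosDef := by
  have hP : P.IsHermitian := by
    simpa using h₂.isHermitian.add (isHermitian_of_isHermitian_add_of_isHermitian_sub h₁.1 h₂.1)
  refine .of_dotProduct_mulVec_pos hP fun x hx => ?_
  have hsum : star x ⬝ᵥ (P + X) *ᵥ x + star x ⬝ᵥ (P - X) *ᵥ x = 2 * (star x ⬝ᵥ P *ᵥ x) := by
    simp only [add_mulVec, sub_mulVec, dotProduct_add, dotProduct_sub]
    ring
  have hx₁ := h₁.dotProduct_mulVec_nonneg x
  have hx₂ := h₂.dotProduct_mulVec_nonneg x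
  rcases (add_nonneg hx₁ hx₂).lt_or_eq with hpos | hzero
  · exact pos_of_mul_pos_right (hsum ▸ hpos) zero_le_two
  · obtain ⟨e₁, e₂⟩ := (add_eq_zero_iff_of_nonneg hx₁ hx₂).1 hzero.symm
    rw [h₁.dotProduct_mulVec_zero_iff] at e₁
    rw [h₂.dotProduct_mulVec_zero_iff] at e₂
    have h2X : (2 : 𝕜) • X *ᵥ x = (P + X) *ᵥ x - (P - X) *ᵥ x := by
      rw [add_mulVec, sub_mulVec]
      module
    rw [e₁, e₂, sub_zero, smul_eq_zero] at h2X
    refine absurd (mulVec_injective_iff_isUnit.2 hX ?_) hx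
    simpa using h2X.resolve_left two_ne_zero

open scoped MatrixOrder in
theorem PosDef.exists_conjTranspose_mul_mul_eq_one (hP : P.PosDef) :
    ∃ T : Matrix n n 𝕜, Tᴴ * P * T = 1 := by
  obtain ⟨R, rfl⟩ := CStarAlgebra.nonneg_iff_eq_star_mul_self.mp hP.posSemidef.nonneg
  have hR : IsUnit R.det := by
    have := (isUnit_iff_isUnit_det _).1 hP.isUnit
    rw [det_mul] at this
    exact isUnit_of_mul_isUnit_right this
  refine ⟨R⁻¹, ?_⟩
  rw [conjTranspose_nonsing_inv, star_eq_conjTranspose, ← mul_assoc,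
    nonsing_inv_mul _ (by simpa using hR.star), one_mul, mul_nonsing_inv _ hR]

theorem PosDef.det_eq_one_iff_of_conjTranspose_mul_mul_eq_one (hP : P.PosDef) (hX : X * X = 1)
    {T : Matrix n n 𝕜} (hT : Tᴴ * P * T = 1) : P.det = 1 ↔ (Tᴴ * X * T).det ^ 2 = 1 := by
  have hdet : (Tᴴ * X * T).det * P.det = X.det := by
    have := congrArg det hT
    simp only [det_mul, det_one] at this ⊢
    linear_combination X.det * this
  have hdetX : X.det ^ 2 = 1 := by rw [sq, ← det_mul, hX, det_one]
  obtain ⟨r, hr, hrP⟩ := RCLike.pos_iff_exists_ofReal.1 hP.det_pos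
  rw [← hrP] at hdet ⊢
  constructor
  · intro h
    rw [h, mul_one] at hdet
    rw [hdet, hdetX]
  · intro h
    have hr2 : ((r ^ 2 : ℝ) : 𝕜) = 1 := by
      push_cast
      linear_combination (congrArg (· ^ 2) hdet).trans hdetX - (r : 𝕜) ^ 2 * h
    rw [(pow_eq_one_iff_of_nonneg hr.le two_ne_zero).1 (by exact_mod_cast hr2),
      RCLike.ofReal_one]

theorem det_eq_one_iff_two_mul_rank_eq (hX : X * X = 1) (h₁ : (P + X).PosSemidef)
    (h₂ : (P - X).PosSemidef) (hrank : (P + X).rank = (P - X).rank) :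
    P.det = 1 ↔ 2 * (P + X).rank = Fintype.card n := by
  have hP := posDef_of_posSemidef_add_of_posSemidef_sub ⟨⟨X, X, hX, hX⟩, rfl⟩ h₁ h₂
  obtain ⟨T, hT⟩ := hP.exists_conjTranspose_mul_mul_eq_one
  have hS : (Tᴴ * X * T).IsHermitian := isHermitian_conjTranspose_mul_mul T
    (isHermitian_of_isHermitian_add_of_isHermitian_sub h₁.1 h₂.1)
  have hT₁ : IsUnit T.det := isUnit_det_of_left_inverse hT
  have hT₂ : IsUnit Tᴴ.det := isUnit_det_of_right_inverse (B := P * T) (by rw [← mul_assoc, hT])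
  have hcongr (M : Matrix n n 𝕜) : (Tᴴ * M * T).rank = M.rank := by
    rw [rank_mul_eq_left_of_isUnit_det _ _ hT₁, rank_mul_eq_right_of_isUnit_det _ _ hT₂]
  have e₁ : Tᴴ * (P + X) * T = 1 + Tᴴ * X * T := by rw [mul_add, add_mul, hT]
  have e₂ : Tᴴ * (P - X) * T = 1 - Tᴴ * X * T := by rw [mul_sub, sub_mul, hT]
  rw [hP.det_eq_one_iff_of_conjTranspose_mul_mul_eq_one hX hT,
    hS.det_sq_eq_one_iff_rank_add_rank (e₁ ▸ h₁.conjTranspose_mul_mul_same T)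
      (e₂ ▸ h₂.conjTranspose_mul_mul_same T),
    ← e₁, ← e₂, hcongr, hcongr, ← hrank, two_mul]

end Matrix

theorem Omg_mul_self (m : ℕ) : Omg m * Omg m = -1 := by
  rw [Omg, fromBlocks_multiply, ← fromBlocks_one, fromBlocks_neg]
  simp

theorem I_smul_map_ofReal_Omg_mul_self (m : ℕ) :
    (Complex.I • (Omg m).map Complex.ofReal) * (Complex.I • (Omg m).map Complex.ofReal) = 1 := by
  have hΩ : (Omg m).map Complex.ofReal * (Omg m).map Complex.ofReal = -1 := by
    have h := congrArg Complex.ofRealHom.mapMatrix (Omg_mul_self m)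
    rwa [map_mul, map_neg, map_one] at h
  rw [smul_mul_smul_comm, Complex.I_mul_I, hΩ]
  simp

theorem pure_iff_rank_general {m : ℕ} (V : Matrix (Fin m ⊕ Fin m) (Fin m ⊕ Fin m) ℝ)
    (hQCM : ((V.map Complex.ofReal) - Complex.I • (Omg m).map Complex.ofReal).PosSemidef) :
    V.det = 1 ↔ ((V.map Complex.ofReal) + Complex.I • (Omg m).map Complex.ofReal).rank = m := by
  have hA : V.map Complex.ofReal + Complex.I • (Omg m).map Complex.ofReal
      = (V.map Complex.ofReal - Complex.I • (Omg m).map Complex.ofReal)ᵀ := by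
    rw [← hQCM.isHermitian.eq, conjTranspose_transpose]
    ext i j
    simp
  have hdet : (V.map Complex.ofReal).det = V.det := (RingHom.map_det Complex.ofRealHom V).symm
  rw [← Complex.ofReal_eq_one, ← hdet,
    det_eq_one_iff_two_mul_rank_eq (I_smul_map_ofReal_Omg_mul_self m) (hA ▸ hQCM.transpose) hQCM
      (by rw [hA, rank_transpose]),
    Fintype.card_sum, Fintype.card_fin]
  omega

/-- A `2m × 2m` quantum covariance matrix `V` (real symmetric with `V ≥ iΩ`) is pure
(`det V = 1`) if and only if the complex matrix `V + iΩ` has rank `m`. -/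
theorem pure_iff_rank {m : ℕ} (V : Matrix (Fin m ⊕ Fin m) (Fin m ⊕ Fin m) ℝ)
    (hsymm : V.IsSymm)
    (hQCM : ((V.map Complex.ofReal) - Complex.I • (Omg m).map Complex.ofReal).PosSemidef) :
    V.det = 1 ↔ ((V.map Complex.ofReal) + Complex.I • (Omg m).map Complex.ofReal).rank = m :=
  pure_iff_rank_general V hQCM
end

section
/- Let V_AB be a bipartite QCM with extension γ_ABE (i.e., the AB block of γ_ABE equals V_AB), and let Γ_E be a QCM on E. Define W_AB := (γ_ABE + 0_AB ⊕ Γ_E)/(γ_E + Γ_E). Then λ_max(V_AB)^{-1} I ≤ Ω_AB^T V_AB^{-1} Ω_AB ≤ W_AB ≤ V_AB. -/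
/-!
Since `Γ_E ≥ iΩ_E` implies `Γ_E ≥ -iΩ_E` (complex conjugation), adding `0 ⊕ Γ_E` to
`γ_ABE - i(Ω_AB ⊕ Ω_E) ≥ 0` gives a positive matrix whose Schur complement of the `E` block is
`W_AB - iΩ_AB`. So `W_AB` is a QCM, and `W_AB ≤ V_AB` because the subtracted term is positive.
Every QCM `W` satisfies `Ωᵀ W⁻¹ Ω ≤ W`: this is the Schur complement of the real matrix
`[[W, Ωᵀ], [Ω, W]]`, which is positive because its quadratic form is the real part of that of
`W - iΩ`. Antitonicity of inversion and `V_AB ≤ λ_max 1` give the remaining inequalities.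
-/

open Matrix ComplexOrder

open scoped MatrixOrder

variable {m p : Type*}

/-- `A ≥ iΩ`, as a statement about the complexification of the real matrix `A`. -/
def IsQCM (Ω A : Matrix m m ℝ) : Prop :=
  (A.map Complex.ofReal - Complex.I • Ω.map Complex.ofReal).PosSemidef

namespace IsQCM

variable {Ω A : Matrix m m ℝ}

theorem isSymm (h : IsQCM Ω A) : A.IsSymm := by
  ext i j
  simpa using congrArg Complex.re (congrFun (congrFun h.1 i) j)

theorem transpose_eq_neg (h : IsQCM Ω A) : Ωᵀ = -Ω := by
  ext i j
  simpa using congrArg Complex.im (congrFun (congrFun h.1 i) j)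

theorem neg (h : IsQCM Ω A) : IsQCM (-Ω) A := by
  have := PosSemidef.transpose h
  rwa [transpose_sub, transpose_smul, ← transpose_map, ← transpose_map, h.isSymm.eq,
    h.transpose_eq_neg] at this

theorem toBlocks₁₁ {γ : Matrix (m ⊕ p) (m ⊕ p) ℝ} {Ω₁ : Matrix m m ℝ} {Ω₂ : Matrix p p ℝ}
    (h : IsQCM (fromBlocks Ω₁ 0 0 Ω₂) γ) : IsQCM Ω₁ γ.toBlocks₁₁ :=
  h.submatrix Sum.inl

theorem toBlocks₂₂ {γ : Matrix (m ⊕ p) (m ⊕ p) ℝ} {Ω₁ : Matrix m m ℝ} {Ω₂ : Matrix p p ℝ}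
    (h : IsQCM (fromBlocks Ω₁ 0 0 Ω₂) γ) : IsQCM Ω₂ γ.toBlocks₂₂ :=
  h.submatrix Sum.inr

end IsQCM

variable [Fintype m] [Fintype p]

theorem Matrix.transpose_mul_mul_le_transpose_mul_mul {A B : Matrix m m ℝ} (h : A ≤ B)
    (C : Matrix m m ℝ) : Cᵀ * A * C ≤ Cᵀ * B * C := by
  simpa [star_eq_conjTranspose, conjTranspose_eq_transpose_of_trivial] using
    star_left_conjugate_le_conjugate h C

theorem re_star_dotProduct_sub_I_smul_mulVec (A Ω : Matrix m m ℝ) (x y : m → ℝ) :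
    RCLike.re (star (fun i => (y i : ℂ) + Complex.I * x i) ⬝ᵥ
      (A.map Complex.ofReal - Complex.I • Ω.map Complex.ofReal) *ᵥ
        fun i => (y i : ℂ) + Complex.I * x i) =
      Sum.elim x y ⬝ᵥ fromBlocks A (-Ω) Ω A *ᵥ Sum.elim x y := by
  simp only [dotProduct, mulVec, Fintype.sum_sum_type, fromBlocks_apply₁₁, fromBlocks_apply₁₂,
    fromBlocks_apply₂₁, fromBlocks_apply₂₂, Sum.elim_inl, Sum.elim_inr, Finset.mul_sum,
    ← Finset.sum_add_distrib, RCLike.re_to_complex, Complex.re_sum]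
  refine Finset.sum_congr rfl fun i _ => Finset.sum_congr rfl fun j _ => ?_
  simp only [Pi.star_apply, star_add, RCLike.star_def, Complex.conj_ofReal, star_mul',
    Complex.conj_I, neg_mul, Matrix.sub_apply, map_apply, Matrix.smul_apply, smul_eq_mul,
    Matrix.neg_apply, Complex.mul_re, Complex.mul_im, Complex.add_re, Complex.add_im,
    Complex.sub_re, Complex.sub_im, Complex.neg_re, Complex.neg_im, Complex.ofReal_re,
    Complex.ofReal_im, Complex.I_re, Complex.I_im]
  ring

theorem IsQCM.posSemidef_fromBlocks {Ω A : Matrix m m ℝ} (h : IsQCM Ω A) :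
    (fromBlocks A Ωᵀ Ω A).PosSemidef := by
  have hherm : (fromBlocks A Ωᵀ Ω A).IsHermitian := by
    simp [IsHermitian, conjTranspose_eq_transpose_of_trivial, fromBlocks_transpose, h.isSymm.eq]
  refine .of_dotProduct_mulVec_nonneg hherm fun v => ?_
  rw [← Sum.elim_comp_inl_inr v, star_trivial, h.transpose_eq_neg,
    ← re_star_dotProduct_sub_I_smul_mulVec]
  exact h.re_dotProduct_nonneg _

variable [DecidableEq p]

theorem Matrix.PosSemidef.fromBlocks_zero₂₂ {𝕜 : Type*} [RCLike 𝕜] {P : Matrix p p 𝕜}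
    (hP : P.PosSemidef) : (fromBlocks (0 : Matrix m m 𝕜) 0 0 P).PosSemidef := by
  simpa [conjTranspose_fromCols_eq_fromRows_conjTranspose, fromRows_mul, fromRows_mul_fromCols,
    ← fromCols_fromRows_eq_fromBlocks] using
    hP.conjTranspose_mul_mul_same (fromCols (0 : Matrix p m 𝕜) (1 : Matrix p p 𝕜))

variable [DecidableEq m]

theorem Matrix.map_inv_of_isUnit_det {R S : Type*} [CommRing R] [CommRing S] (f : R →+* S)
    {A : Matrix m m R} (h : IsUnit A.det) : A⁻¹.map f = (A.map f)⁻¹ :=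
  (inv_eq_left_inv (by
    rw [← Matrix.map_mul, nonsing_inv_mul _ h, Matrix.map_one _ f.map_zero f.map_one])).symm

theorem Matrix.PosDef.map_ofReal {A : Matrix m m ℝ} (hA : A.PosDef) :
    (A.map Complex.ofReal).PosDef := by
  obtain ⟨B, hB⟩ := CStarAlgebra.nonneg_iff_eq_star_mul_self.mp hA.posSemidef.nonneg
  have hmap : A.map Complex.ofReal = (B.map Complex.ofReal)ᴴ * B.map Complex.ofReal := by
    ext i j
    simp [hB, mul_apply]
  have hpsd : (A.map Complex.ofReal).PosSemidef := hmap ▸ posSemidef_conjTranspose_mul_self _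
  exact hpsd.posDef_iff_isUnit.mpr (hA.isUnit.map Complex.ofRealHom.mapMatrix)

theorem Matrix.inv_le_inv_of_le {𝕜 : Type*} [RCLike 𝕜] {A B : Matrix m m 𝕜} (hA : A.PosDef)
    (hAB : A ≤ B) : B⁻¹ ≤ A⁻¹ := by
  have hB : B.PosDef := by simpa using hA.add_posSemidef hAB
  have := hA.isUnit.invertible
  have := hB.isUnit.invertible
  have := hA.inv.isUnit.invertible
  have hblock : (fromBlocks B 1 (1 : Matrix m m 𝕜)ᴴ A⁻¹).PosSemidef := by
    rw [PosDef.fromBlocks₂₂ _ _ hA.inv]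
    simpa [inv_inv_of_invertible] using le_iff.mp hAB
  simpa [le_iff] using (PosDef.fromBlocks₁₁ _ _ hB).mp hblock

theorem Matrix.inv_smul_one (c : ℝ) : (c • (1 : Matrix m m ℝ))⁻¹ = c⁻¹ • 1 := by
  rcases eq_or_ne c 0 with rfl | hc
  · simp
  · exact inv_eq_left_inv (by simp [smul_smul, hc])

theorem Matrix.IsHermitian.le_iSup_eigenvalues_smul_one {A : Matrix m m ℝ} (hA : A.IsHermitian) :
    A ≤ (⨆ i, hA.eigenvalues i) • 1 := by
  rw [← Algebra.algebraMap_eq_smul_one]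
  refine le_algebraMap_of_spectrum_le (fun x hx => ?_) hA
  obtain ⟨i, rfl⟩ := hA.spectrum_real_eq_range_eigenvalues ▸ hx
  exact le_ciSup (Set.finite_range _).bddAbove i

theorem IsQCM.posDef {Ω A : Matrix m m ℝ} (hΩ : IsUnit Ω) (h : IsQCM Ω A) : A.PosDef := by
  have hR := h.posSemidef_fromBlocks
  have hA : A.PosSemidef := hR.submatrix Sum.inl
  refine .of_dotProduct_mulVec_pos hA.1 fun x hx => ?_
  refine (hA.dotProduct_mulVec_nonneg x).lt_of_ne fun hzero => hx ?_
  have hker : fromBlocks A Ωᵀ Ω A *ᵥ Sum.elim x 0 = 0 :=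
    (hR.dotProduct_mulVec_zero_iff _).mp (by simpa [fromBlocks_mulVec] using hzero.symm)
  have hΩx : Ω *ᵥ x = 0 := by simpa [fromBlocks_mulVec] using congrArg (· ∘ Sum.inr) hker
  exact mulVec_injective_iff_isUnit.mpr hΩ (by simpa using hΩx)

theorem IsQCM.transpose_mul_inv_mul_le {Ω A : Matrix m m ℝ} (hΩ : IsUnit Ω) (h : IsQCM Ω A) :
    Ωᵀ * A⁻¹ * Ω ≤ A := by
  have hA := h.posDef hΩ
  have := hA.isUnit.invertible
  have hR : (fromBlocks A Ωᵀ Ωᵀᴴ A).PosSemidef := by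
    simpa [conjTranspose_eq_transpose_of_trivial] using h.posSemidef_fromBlocks
  simpa [le_iff, conjTranspose_eq_transpose_of_trivial] using (PosDef.fromBlocks₂₂ _ _ hA).mp hR

omit [DecidableEq m] in
theorem IsQCM.schurComplement {γ : Matrix (m ⊕ p) (m ⊕ p) ℝ} {Ω₁ : Matrix m m ℝ}
    {Ω₂ Γ : Matrix p p ℝ} (hγ : IsQCM (fromBlocks Ω₁ 0 0 Ω₂) γ) (hΓ : IsQCM (-Ω₂) Γ)
    (hK : (γ.toBlocks₂₂ + Γ).PosDef) :
    IsQCM Ω₁ (γ.toBlocks₁₁ - γ.toBlocks₁₂ * (γ.toBlocks₂₂ + Γ)⁻¹ * γ.toBlocks₂₁) := by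
  set K := γ.toBlocks₂₂ + Γ
  have hγs := hγ.isSymm
  have hblock : (fromBlocks (γ.toBlocks₁₁.map Complex.ofReal - Complex.I • Ω₁.map Complex.ofReal)
      (γ.toBlocks₁₂.map Complex.ofReal) (γ.toBlocks₁₂.map Complex.ofReal)ᴴ
      (K.map Complex.ofReal)).PosSemidef := by
    convert hγ.add (PosSemidef.fromBlocks_zero₂₂ (m := m) hΓ) using 1
    ext (i | i) (j | j) <;>
      simp [K, hγs.apply, Matrix.toBlocks₁₁, Matrix.toBlocks₁₂, Matrix.toBlocks₂₂]
  have hK' := hK.map_ofReal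
  have := hK'.isUnit.invertible
  have hinv : (K.map Complex.ofReal)⁻¹ = K⁻¹.map Complex.ofReal :=
    (map_inv_of_isUnit_det Complex.ofRealHom ((isUnit_iff_isUnit_det K).mp hK.isUnit)).symm
  have hschur := (PosDef.fromBlocks₂₂ _ _ hK').mp hblock
  rw [hinv] at hschur
  refine (congrArg PosSemidef ?_).mp hschur
  ext i j
  simp [mul_apply, Matrix.toBlocks₁₂, Matrix.toBlocks₂₁, hγs.apply]
  ring

theorem Omg_transpose (k : ℕ) : (Omg k)ᵀ = -Omg k := by
  simp [Omg, fromBlocks_transpose, fromBlocks_neg]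

theorem Omg_transpose_mul_self (k : ℕ) : (Omg k)ᵀ * Omg k = 1 := by
  rw [Omg_transpose, neg_mul]
  simp [Omg, fromBlocks_multiply, ← fromBlocks_one, fromBlocks_neg]

theorem isUnit_Omg (k : ℕ) : IsUnit (Omg k) :=
  (isUnit_iff_isUnit_det _).mpr (isUnit_det_of_left_inverse (Omg_transpose_mul_self k))

theorem measured_qcm_sandwich_general {n k : ℕ}
    (γ : Matrix ((Fin n ⊕ Fin n) ⊕ (Fin k ⊕ Fin k)) ((Fin n ⊕ Fin n) ⊕ (Fin k ⊕ Fin k)) ℝ)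
    (V : Matrix (Fin n ⊕ Fin n) (Fin n ⊕ Fin n) ℝ)
    (ΓE : Matrix (Fin k ⊕ Fin k) (Fin k ⊕ Fin k) ℝ)
    (hγ : ((γ.map Complex.ofReal) -
      Complex.I • (fromBlocks (Omg n) 0 0 (Omg k)).map Complex.ofReal).PosSemidef)
    (hext : γ.toBlocks₁₁ = V)
    (hV : V.IsHermitian)
    (hΓ : ((ΓE.map Complex.ofReal) - Complex.I • (Omg k).map Complex.ofReal).PosSemidef) :
    ((Omg n)ᵀ * V⁻¹ * Omg n
        - (⨆ i, hV.eigenvalues i)⁻¹ • (1 : Matrix (Fin n ⊕ Fin n) (Fin n ⊕ Fin n) ℝ)).PosSemidef ∧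
    ((γ.toBlocks₁₁ - γ.toBlocks₁₂ * (γ.toBlocks₂₂ + ΓE)⁻¹ * γ.toBlocks₂₁)
        - (Omg n)ᵀ * V⁻¹ * Omg n).PosSemidef ∧
    (V - (γ.toBlocks₁₁ - γ.toBlocks₁₂ * (γ.toBlocks₂₂ + ΓE)⁻¹ * γ.toBlocks₂₁)).PosSemidef := by
  have hγ : IsQCM (fromBlocks (Omg n) 0 0 (Omg k)) γ := hγ
  have hΓ : IsQCM (Omg k) ΓE := hΓ
  subst hext
  set W := γ.toBlocks₁₁ - γ.toBlocks₁₂ * (γ.toBlocks₂₂ + ΓE)⁻¹ * γ.toBlocks₂₁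
  have hVpd := hγ.toBlocks₁₁.posDef (isUnit_Omg n)
  have hK : (γ.toBlocks₂₂ + ΓE).PosDef :=
    (hγ.toBlocks₂₂.posDef (isUnit_Omg k)).add_posSemidef (hΓ.posDef (isUnit_Omg k)).posSemidef
  have hW : IsQCM (Omg n) W := hγ.schurComplement hΓ.neg hK
  have hWV : W ≤ γ.toBlocks₁₁ := by
    refine sub_le_self _ (nonneg_iff_posSemidef.mpr ?_)
    have h₂₁ : γ.toBlocks₂₁ = γ.toBlocks₁₂ᴴ := (congr_arg Matrix.toBlocks₂₁ hγ.isSymm).symm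
    simpa [h₂₁] using hK.inv.posSemidef.mul_mul_conjTranspose_same γ.toBlocks₁₂
  refine ⟨le_iff.mp ?_, le_iff.mp ?_, hWV⟩
  · set lam := ⨆ i, hV.eigenvalues i
    have hinv : lam⁻¹ • 1 ≤ γ.toBlocks₁₁⁻¹ := by
      simpa [inv_smul_one] using inv_le_inv_of_le hVpd hV.le_iSup_eigenvalues_smul_one
    calc lam⁻¹ • 1 = (Omg n)ᵀ * (lam⁻¹ • 1) * Omg n := by simp [Omg_transpose_mul_self]
      _ ≤ (Omg n)ᵀ * γ.toBlocks₁₁⁻¹ * Omg n := transpose_mul_mul_le_transpose_mul_mul hinv _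
  · calc (Omg n)ᵀ * γ.toBlocks₁₁⁻¹ * Omg n ≤ (Omg n)ᵀ * W⁻¹ * Omg n :=
          transpose_mul_mul_le_transpose_mul_mul (inv_le_inv_of_le (hW.posDef (isUnit_Omg n)) hWV) _
      _ ≤ W := hW.transpose_mul_inv_mul_le (isUnit_Omg n)

/-- Let `V_AB` be a QCM with extension `γ_ABE` (its `AB` block equals `V_AB`) and let
`Γ_E` be a QCM on `E`. For `W_AB := (γ_ABE + 0 ⊕ Γ_E)/(γ_E + Γ_E)` one has
`λ_max(V_AB)⁻¹ 1 ≤ Ω_ABᵀ V_AB⁻¹ Ω_AB ≤ W_AB ≤ V_AB` (Loewner order). -/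
theorem measured_qcm_sandwich {n k : ℕ} [NeZero n]
    (γ : Matrix ((Fin n ⊕ Fin n) ⊕ (Fin k ⊕ Fin k)) ((Fin n ⊕ Fin n) ⊕ (Fin k ⊕ Fin k)) ℝ)
    (V : Matrix (Fin n ⊕ Fin n) (Fin n ⊕ Fin n) ℝ)
    (ΓE : Matrix (Fin k ⊕ Fin k) (Fin k ⊕ Fin k) ℝ)
    (hγs : γ.IsSymm)
    (hγ : ((γ.map Complex.ofReal) -
      Complex.I • (fromBlocks (Omg n) 0 0 (Omg k)).map Complex.ofReal).PosSemidef)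
    (hext : γ.toBlocks₁₁ = V)
    (hV : V.IsHermitian)
    (hΓs : ΓE.IsSymm)
    (hΓ : ((ΓE.map Complex.ofReal) - Complex.I • (Omg k).map Complex.ofReal).PosSemidef) :
    ((Omg n)ᵀ * V⁻¹ * Omg n
        - (⨆ i, hV.eigenvalues i)⁻¹ • (1 : Matrix (Fin n ⊕ Fin n) (Fin n ⊕ Fin n) ℝ)).PosSemidef ∧
    ((γ.toBlocks₁₁ - γ.toBlocks₁₂ * (γ.toBlocks₂₂ + ΓE)⁻¹ * γ.toBlocks₂₁)
        - (Omg n)ᵀ * V⁻¹ * Omg n).PosSemidef ∧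
    (V - (γ.toBlocks₁₁ - γ.toBlocks₁₂ * (γ.toBlocks₂₂ + ΓE)⁻¹ * γ.toBlocks₂₁)).PosSemidef :=
  measured_qcm_sandwich_general γ V ΓE hγ hext hV hΓ
end

section
/- Data-processing inequality for log-determinant mutual information: for any bipartite positive definite matrix V_AB and any positive semidefinite matrix K_A on system A, I_M(A:B)_{V_AB + K_A ⊕ 0_B} ≤ I_M(A:B)_{V_AB}. -/
/-!
Write `V = [[A, B], [Bᴴ, D]]`. Schur's formula `det V = det A * det (D - Bᴴ * A⁻¹ * B)` gives
`I_M(V) = ½ log₂ (det D / det S)` with `S` the Schur complement of `A`. Replacing `A` by `A + K`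
leaves `D` alone and can only enlarge `S` in the Loewner order, because `(A + K)⁻¹ ≤ A⁻¹`;
and the determinant is monotone on positive definite matrices.
-/

open Matrix

/-- The log-determinant mutual information of a bipartite positive matrix. -/
noncomputable def IM {α β : Type*} [Fintype α] [Fintype β] [DecidableEq α] [DecidableEq β]
    (W : Matrix (α ⊕ β) (α ⊕ β) ℝ) : ℝ :=
  (1/2) * Real.logb 2 ((W.toBlocks₁₁.det * W.toBlocks₂₂.det) / W.det)

open scoped MatrixOrder ComplexOrder

namespace Matrix

variable {m n R 𝕜 : Type*}

lemma IsHermitian.exists_eq_fromBlocks [InvolutiveStar R] {V : Matrix (m ⊕ n) (m ⊕ n) R}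
    (hV : V.IsHermitian) :
    ∃ (A : Matrix m m R) (B : Matrix m n R) (D : Matrix n n R),
      V = Matrix.fromBlocks A B Bᴴ D := by
  rw [← fromBlocks_toBlocks V, isHermitian_fromBlocks_iff] at hV
  exact ⟨V.toBlocks₁₁, V.toBlocks₁₂, V.toBlocks₂₂, by rw [hV.2.1, fromBlocks_toBlocks]⟩

lemma PosSemidef.fromBlocks_zero [Fintype m] [Fintype n] [DecidableEq m]
    [CommRing R] [PartialOrder R] [StarRing R] {K : Matrix m m R} (hK : K.PosSemidef) :
    (fromBlocks K 0 0 0 : Matrix (m ⊕ n) (m ⊕ n) R).PosSemidef := by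
  have := hK.conjTranspose_mul_mul_same (fromCols (1 : Matrix m m R) (0 : Matrix m n R))
  rwa [conjTranspose_fromCols_eq_fromRows_conjTranspose, fromRows_mul, fromRows_mul_fromCols,
    conjTranspose_one, conjTranspose_zero, Matrix.one_mul, Matrix.mul_one, Matrix.zero_mul,
    Matrix.mul_zero, Matrix.zero_mul, Matrix.zero_mul] at this

variable [RCLike 𝕜] [Fintype m] [Fintype n] [DecidableEq m]

lemma PosSemidef.one_le_det_one_add [DecidableEq n] {Q : Matrix n n 𝕜} (hQ : Q.PosSemidef) :
    1 ≤ (1 + Q).det := by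
  have hcfc : cfc (fun x : ℝ => 1 + x) Q = 1 + Q := by
    rw [cfc_const_add 1 (fun x => x) Q, cfc_id' ℝ Q, Algebra.algebraMap_eq_smul_one, one_smul]
  have hprod : (1 : ℝ) ≤ ∏ i, (1 + hQ.1.eigenvalues i) :=
    Finset.one_le_prod fun i _ => le_add_of_nonneg_right (hQ.eigenvalues_nonneg i)
  rw [← hcfc, hQ.1.cfc_eq]
  simpa [IsHermitian.cfc, -Unitary.conjStarAlgAut_apply] using
    (RCLike.ofReal_le_ofReal (K := 𝕜)).mpr hprod

lemma PosDef.det_le_det_of_le [DecidableEq n] {M N : Matrix n n 𝕜} (hM : M.PosDef)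
    (hMN : M ≤ N) : M.det ≤ N.det := by
  set R := CFC.sqrt (N - M)
  have hRR : R * R = N - M := CFC.sqrt_mul_sqrt_self _ (sub_nonneg.mpr hMN)
  have hR : Rᴴ = R := (CFC.sqrt_nonneg (N - M)).posSemidef.1
  have hN : N = M * (1 + M⁻¹ * R * R) := by
    rw [Matrix.mul_add, Matrix.mul_one, ← Matrix.mul_assoc, ← Matrix.mul_assoc,
      mul_nonsing_inv _ (isUnit_iff_ne_zero.mpr hM.det_pos.ne'), Matrix.one_mul, hRR,
      add_sub_cancel]
  have hSylvester : (1 + M⁻¹ * R * R).det = (1 + R * M⁻¹ * R).det := by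
    rw [det_one_add_mul_comm, ← Matrix.mul_assoc]
  have hone : 1 ≤ (1 + R * M⁻¹ * R).det := by
    have := hM.inv.posSemidef.conjTranspose_mul_mul_same R
    rw [hR] at this
    exact this.one_le_det_one_add
  calc M.det = M.det * 1 := (mul_one _).symm
    _ ≤ M.det * (1 + M⁻¹ * R * R).det := by
      rw [hSylvester]; exact mul_le_mul_of_nonneg_left hone hM.det_pos.le
    _ = N.det := by rw [← det_mul, ← hN]

lemma PosDef.conjTranspose_mul_inv_add_mul_le {A K : Matrix m m 𝕜} (hA : A.PosDef)
    (hK : K.PosSemidef) (B : Matrix m n 𝕜) : Bᴴ * (A + K)⁻¹ * B ≤ Bᴴ * A⁻¹ * B := by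
  have := hA.isUnit.invertible
  have := (hA.add_posSemidef hK).isUnit.invertible
  -- `[[A, B], [Bᴴ, Bᴴ * A⁻¹ * B]]` has zero Schur complement; adding `K ⊕ 0` keeps it `≥ 0`.
  have h0 : (fromBlocks A B Bᴴ (Bᴴ * A⁻¹ * B)).PosSemidef :=
    (hA.fromBlocks₁₁ B _).mpr (by rw [sub_self]; exact PosSemidef.zero)
  have h1 := h0.add (hK.fromBlocks_zero (n := n))
  rw [fromBlocks_add, add_zero, add_zero, add_zero] at h1
  exact ((hA.add_posSemidef hK).fromBlocks₁₁ B _).mp h1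

lemma PosDef.schur_complement₁₁ [DecidableEq n] {A : Matrix m m 𝕜} {B : Matrix m n 𝕜}
    {D : Matrix n n 𝕜} (h : (fromBlocks A B Bᴴ D).PosDef) : (D - Bᴴ * A⁻¹ * B).PosDef := by
  have hA : A.PosDef := h.submatrix Sum.inl_injective
  have := hA.isUnit.invertible
  have hdet := h.det_pos.ne'
  rw [det_fromBlocks₁₁, invOf_eq_nonsing_inv] at hdet
  exact ((hA.fromBlocks₁₁ B D).mp h.posSemidef).posDef_iff_det_ne_zero.mpr
    (right_ne_zero_of_mul hdet)

end Matrix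

lemma IM_fromBlocks {α β : Type*} [Fintype α] [Fintype β] [DecidableEq α] [DecidableEq β]
    {A : Matrix α α ℝ} (B : Matrix α β ℝ) (D : Matrix β β ℝ) (hA : IsUnit A) :
    IM (fromBlocks A B Bᴴ D) = 1 / 2 * Real.logb 2 (D.det / (D - Bᴴ * A⁻¹ * B).det) := by
  have := hA.invertible
  rw [IM, toBlocks_fromBlocks₁₁, toBlocks_fromBlocks₂₂, det_fromBlocks₁₁, invOf_eq_nonsing_inv,
    mul_div_mul_left _ _ ((isUnit_iff_isUnit_det A).mp hA).ne_zero]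

/-- Data-processing inequality for the log-determinant mutual information: adding a
positive semidefinite matrix `K_A` on system `A` cannot increase it,
`I_M(A:B)_{V + K_A ⊕ 0} ≤ I_M(A:B)_V`. -/
theorem IM_data_processing {α β : Type*} [Fintype α] [Fintype β]
    [DecidableEq α] [DecidableEq β]
    (V : Matrix (α ⊕ β) (α ⊕ β) ℝ) (hV : V.PosDef)
    (K : Matrix α α ℝ) (hK : K.PosSemidef) :
    IM (V + fromBlocks K 0 0 0) ≤ IM V := by
  obtain ⟨A, B, D, rfl⟩ := hV.isHermitian.exists_eq_fromBlocks
  have hA : A.PosDef := hV.submatrix Sum.inl_injective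
  have hD : D.PosDef := hV.submatrix Sum.inr_injective
  have hAK : (A + K).PosDef := hA.add_posSemidef hK
  have hS : (D - Bᴴ * A⁻¹ * B).PosDef := hV.schur_complement₁₁
  have hSS' : D - Bᴴ * A⁻¹ * B ≤ D - Bᴴ * (A + K)⁻¹ * B :=
    sub_le_sub_left (hA.conjTranspose_mul_inv_add_mul_le hK B) D
  have hS' : (D - Bᴴ * (A + K)⁻¹ * B).PosDef := by
    simpa only [add_sub_cancel] using hS.add_posSemidef hSS'
  have hdet_le := hS.det_le_det_of_le hSS'
  rw [fromBlocks_add, add_zero, add_zero, add_zero, IM_fromBlocks B D hA.isUnit,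
    IM_fromBlocks B D hAK.isUnit]
  gcongr
  · norm_num
  · exact div_pos hD.det_pos hS'.det_pos
  · exact hD.det_pos.le
  · exact hS.det_pos
end
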